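/- arXiv:1209.3185 — 3 statements merged into one kernel-verified Lean document; each statement's English description precedes it below -/
import Mathlib

section
/- If L is Hermitian, J is invertible skew-Hermitian, and u is an eigenvector of JL with eigenvalue ν, then Re(ν)·(Ku,u) = 0 and (Lu,u) = -Im(ν)·(Ku,u), where K = (iJ)⁻¹. -/
open Matrix

/-- If `L` is Hermitian, `J` is invertible skew-Hermitian, and `JLu = ν u`, then with
`K = (iJ)⁻¹` one has `Re(ν)·(Ku,u) = 0` and `(Lu,u) = -Im(ν)·(Ku,u)`. -/
theorem real_and_imaginary_identities
    (n : ℕ) (L J : Matrix (Fin n) (Fin n) ℂ)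
    (hL : Lᴴ = L) (hJ : Jᴴ = -J) (hJinv : IsUnit J.det)
    (K : Matrix (Fin n) (Fin n) ℂ) (hK : K = (Complex.I • J)⁻¹)
    (ν : ℂ) (u : Fin n → ℂ) (hu : u ≠ 0)
    (heig : (J * L) *ᵥ u = ν • u) :
    (ν.re : ℂ) * ((K *ᵥ u) ⬝ᵥ star u) = 0 ∧
      (L *ᵥ u) ⬝ᵥ star u = -(ν.im : ℂ) * ((K *ᵥ u) ⬝ᵥ star u) := by
  -- K is Hermitian
  have hiJ : (Complex.I • J)ᴴ = Complex.I • J := by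
    rw [conjTranspose_smul, hJ]
    simp [smul_smul]
  have hKher : Kᴴ = K := by
    rw [hK, conjTranspose_nonsing_inv, hiJ]
  -- K * (I • J) = 1
  have hdet : IsUnit (Complex.I • J).det := by
    rw [Matrix.det_smul]
    exact (IsUnit.pow _ (isUnit_iff_ne_zero.mpr Complex.I_ne_zero)).mul hJinv
  have hKJ : K * (Complex.I • J) = 1 := by
    rw [hK]; exact Matrix.nonsing_inv_mul _ hdet
  have hKJ' : K * J = (-Complex.I) • (1 : Matrix (Fin n) (Fin n) ℂ) := by
    have : Complex.I • (K * J) = 1 := by rw [← Matrix.mul_smul]; exact hKJ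
    calc K * J = (-Complex.I) • (Complex.I • (K * J)) := by
          rw [smul_smul]; simp
      _ = (-Complex.I) • (1 : Matrix (Fin n) (Fin n) ℂ) := by rw [this]
  -- L *ᵥ u = (I * ν) • (K *ᵥ u)
  have key : L *ᵥ u = (Complex.I * ν) • (K *ᵥ u) := by
    have h1 : K *ᵥ ((J * L) *ᵥ u) = K *ᵥ (ν • u) := by rw [heig]
    rw [mulVec_mulVec, ← Matrix.mul_assoc, hKJ', mulVec_smul] at h1
    have h2 : (-Complex.I) • (L *ᵥ u) = ν • (K *ᵥ u) := by
      rw [← h1]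
      simp [Matrix.smul_mul, Matrix.smul_mulVec, Matrix.one_mul, Matrix.neg_mulVec]
    calc L *ᵥ u = Complex.I • ((-Complex.I) • (L *ᵥ u)) := by
          rw [smul_smul]; simp
      _ = Complex.I • (ν • (K *ᵥ u)) := by rw [h2]
      _ = (Complex.I * ν) • (K *ᵥ u) := by rw [smul_smul]
  set a : ℂ := (K *ᵥ u) ⬝ᵥ star u with ha
  set b : ℂ := (L *ᵥ u) ⬝ᵥ star u with hb
  -- realness
  have hreal : ∀ (M : Matrix (Fin n) (Fin n) ℂ), Mᴴ = M →
      star ((M *ᵥ u) ⬝ᵥ star u) = (M *ᵥ u) ⬝ᵥ star u := by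
    intro M hM
    conv_lhs => rw [← star_dotProduct_star, star_star, star_mulVec, hM]
    rw [dotProduct_comm, ← dotProduct_mulVec, dotProduct_comm]
  have haR : star a = a := hreal K hKher
  have hbR : star b = b := hreal L hL
  have hbab : b = Complex.I * ν * a := by
    rw [hb, key, smul_dotProduct, smul_eq_mul]
  have him : a.im = 0 := by
    have := congrArg Complex.im haR
    simp only [Complex.star_def, Complex.conj_im] at this
    linarith
  have hbim : b.im = 0 := by
    have := congrArg Complex.im hbR
    simp only [Complex.star_def, Complex.conj_im] at this
    linarith
  rw [hbab] at hbim
  simp only [Complex.mul_im, Complex.mul_re, Complex.I_re, Complex.I_im, him] at hbim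
  constructor
  · apply Complex.ext <;>
      simp only [Complex.mul_re, Complex.mul_im, Complex.ofReal_re, Complex.ofReal_im,
        Complex.zero_re, Complex.zero_im, him] <;> nlinarith [hbim]
  · rw [hbab]
    apply Complex.ext <;>
      simp only [Complex.mul_re, Complex.mul_im, Complex.I_re, Complex.I_im,
        Complex.neg_re, Complex.neg_im, Complex.ofReal_re, Complex.ofReal_im, him] <;>
      nlinarith [hbim]
end

section
/- If ν = -iλ is a simple purely imaginary eigenvalue of JL with eigenvector u (L Hermitian, J invertible skew-Hermitian), then (J⁻¹u, u) ≠ 0, equivalently (Ku,u) ≠ 0 where K = (iJ)⁻¹. -/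
/-!
Because `L` is Hermitian and `J⁻¹` skew-Hermitian, `w = u* J⁻¹` is a left eigenvector of `JL`
for `-conj ν`, which equals `ν` as `ν` is purely imaginary; and `(J⁻¹u, u) = w u`. If `w u = 0`
while `ν` is simple, its eigenspace is a line, so the range of `JL - ν` has codimension one and
is the annihilator of `w`. Then `u = (JL - ν) x` for some `x`, and `x` is a generalized
eigenvector outside the eigenspace, making the algebraic multiplicity at least two.
-/

open Matrix Module

namespace Module.End

variable {K V : Type*} [Field K] [AddCommGroup V] [Module K V] [FiniteDimensional K V]
  {f : End K V} {μ : K}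

theorem range_sub_smul_eq_ker_of_finrank_eigenspace_le_one {φ : Dual K V} (hφ : φ ≠ 0)
    (hφf : φ ∘ₗ f = μ • φ) (h : finrank K (f.eigenspace μ) ≤ 1) :
    LinearMap.range (f - μ • 1) = LinearMap.ker φ := by
  have hle : LinearMap.range (f - μ • 1) ≤ LinearMap.ker φ := by
    rw [LinearMap.range_le_ker_iff, LinearMap.comp_sub, hφf, LinearMap.comp_smul, one_eq_id,
      LinearMap.comp_id, sub_self]
  refine Submodule.eq_of_le_of_finrank_le hle ?_
  have hrank := (f - μ • 1).finrank_range_add_finrank_ker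
  have hker := φ.finrank_ker_add_one_of_ne_zero hφ
  rw [← eigenspace_def] at hrank
  omega

theorem two_le_finrank_genEigenspace_two {v : V} (hv : v ≠ 0) (hfv : f v = μ • v)
    (hrange : v ∈ LinearMap.range (f - μ • 1)) : 2 ≤ finrank K (f.genEigenspace μ (2 : ℕ)) := by
  obtain ⟨x, hx⟩ := hrange
  have hv_mem : v ∈ f.eigenspace μ := mem_eigenspace_iff.mpr hfv
  have hlt : f.eigenspace μ < f.genEigenspace μ (2 : ℕ) := by
    refine lt_of_le_of_ne ((f.genEigenspace μ).monotone (by norm_num)) fun heq => hv ?_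
    have hx_mem : x ∈ f.eigenspace μ := by
      rw [heq, mem_genEigenspace_nat, LinearMap.mem_ker, pow_two, Module.End.mul_apply, hx]
      rwa [eigenspace_def, LinearMap.mem_ker] at hv_mem
    rwa [eigenspace_def, LinearMap.mem_ker, hx] at hx_mem
  have hpos : finrank K (f.eigenspace μ) ≠ 0 := by
    rw [Ne, Submodule.finrank_eq_zero]
    exact fun h => hv ((Submodule.eq_bot_iff _).mp h v hv_mem)
  have := Submodule.finrank_lt_finrank_of_lt hlt
  omega

theorem two_le_rootMultiplicity_charpoly_of_apply_eq_zero {v : V} {φ : Dual K V}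
    (hv : v ≠ 0) (hφ : φ ≠ 0) (hfv : f v = μ • v) (hφf : φ ∘ₗ f = μ • φ) (hφv : φ v = 0) :
    2 ≤ f.charpoly.rootMultiplicity μ := by
  by_contra! hsimple
  have heig : finrank K (f.eigenspace μ) ≤ 1 := by
    have := LinearMap.finrank_eigenspace_le f μ
    omega
  have hrange : v ∈ LinearMap.range (f - μ • 1) := by
    rwa [range_sub_smul_eq_ker_of_finrank_eigenspace_le_one hφ hφf heig]
  have := LinearMap.finrank_genEigenspace_le f μ 2
  have := two_le_finrank_genEigenspace_two hv hfv hrange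
  omega

end Module.End

namespace Matrix

variable {K ι : Type*} [Field K] [Fintype ι] [DecidableEq ι]

theorem two_le_rootMultiplicity_charpoly_of_dotProduct_eq_zero (A : Matrix ι ι K) {μ : K}
    {u w : ι → K} (hu : u ≠ 0) (hw : w ≠ 0) (hAu : A *ᵥ u = μ • u) (hwA : w ᵥ* A = μ • w)
    (hwu : w ⬝ᵥ u = 0) : 2 ≤ A.charpoly.rootMultiplicity μ := by
  rw [← charpoly_toLin']
  refine End.two_le_rootMultiplicity_charpoly_of_apply_eq_zero (φ := dotProductEquiv K ι w)
    hu ((dotProductEquiv K ι).map_ne_zero_iff.mpr hw) (by simpa using hAu) ?_ hwu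
  refine LinearMap.ext fun x => ?_
  simp [dotProduct_mulVec, hwA]

theorem star_vecMul_inv_vecMul_mul_eq [StarRing K] {L J : Matrix ι ι K} (hL : Lᴴ = L)
    (hJ : Jᴴ = -J) (hJinv : IsUnit J.det) {u : ι → K} {μ : K} (heig : (J * L) *ᵥ u = μ • u) :
    (star u ᵥ* J⁻¹) ᵥ* (J * L) = (-star μ) • (star u ᵥ* J⁻¹) := by
  have hLu : L *ᵥ u = μ • (J⁻¹ *ᵥ u) := by
    rw [← mulVec_smul, ← heig, mulVec_mulVec, ← mul_assoc, nonsing_inv_mul J hJinv, one_mul]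
  have hJinvH : (J⁻¹)ᴴ = -J⁻¹ := by
    rw [conjTranspose_nonsing_inv, hJ]
    exact inv_eq_left_inv (by rw [neg_mul_neg, nonsing_inv_mul J hJinv])
  calc (star u ᵥ* J⁻¹) ᵥ* (J * L) = star (L *ᵥ u) := by
        rw [vecMul_vecMul, ← mul_assoc, nonsing_inv_mul J hJinv, one_mul, star_mulVec, hL]
    _ = (-star μ) • (star u ᵥ* J⁻¹) := by
        rw [hLu, star_smul, star_mulVec, hJinvH, vecMul_neg, smul_neg, neg_smul]

end Matrix

/-- If `ν = -iλ` is a simple purely imaginary eigenvalue of `JL` with eigenvector `u`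
(`L` Hermitian, `J` invertible skew-Hermitian), then `(J⁻¹u, u) ≠ 0`. -/
theorem simple_imaginary_eigenvalue_nondegenerate
    (n : ℕ) (L J : Matrix (Fin n) (Fin n) ℂ)
    (hL : Lᴴ = L) (hJ : Jᴴ = -J) (hJinv : IsUnit J.det)
    (lam : ℝ) (u : Fin n → ℂ) (hu : u ≠ 0)
    (heig : (J * L) *ᵥ u = (-(Complex.I * lam)) • u)
    (hsimple : Polynomial.rootMultiplicity (-(Complex.I * lam)) (Matrix.charpoly (J * L)) = 1) :
    (J⁻¹ *ᵥ u) ⬝ᵥ star u ≠ 0 := by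
  intro hdeg
  have himag : -star (-(Complex.I * lam)) = -(Complex.I * lam) := by simp
  have hw : star u ᵥ* J⁻¹ ≠ 0 := fun hw => hu <| by
    simpa [vecMul_vecMul, nonsing_inv_mul J hJinv] using congrArg (· ᵥ* J) hw
  have := (J * L).two_le_rootMultiplicity_charpoly_of_dotProduct_eq_zero hu hw heig
    (by rw [star_vecMul_inv_vecMul_mul_eq hL hJ hJinv heig, himag])
    (by rwa [← dotProduct_mulVec, dotProduct_comm])
  omega
end

section
/- If J and L are in canonical form with J the standard symplectic matrix and L = diag(L₊, L₋) block diagonal with L₊, L₋ invertible Hermitian, then ν ≠ 0 is an eigenvalue of JL if and only if λ = ν² is a characteristic value of the linear pencil ℒ(λ) = L₊ + λL₋⁻¹. -/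
/-!
Since `JL - ν = [[-ν, L₋], [-L₊, -ν]]`, taking the Schur complement of the scalar block `-ν` gives
`det (JL - ν) = det (ν² + L₊ L₋) = det (L₊ + ν² L₋⁻¹) · det L₋`.
-/

open Matrix

section

variable {m n K : Type*} [DecidableEq m] [DecidableEq n]

theorem fromBlocks_sub_smul_one [Ring K] (A : Matrix m m K) (B : Matrix m n K)
    (C : Matrix n m K) (D : Matrix n n K) (c : K) :
    fromBlocks A B C D - c • 1 = fromBlocks (A - c • 1) B C (D - c • 1) := by
  rw [← fromBlocks_one, fromBlocks_smul, sub_eq_add_neg, fromBlocks_neg, fromBlocks_add]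
  simp [sub_eq_add_neg]

variable [Fintype n]

theorem fromBlocks_zero_one_neg_one_zero_mul_fromBlocks_diagonal [Ring K] (A D : Matrix n n K) :
    fromBlocks (0 : Matrix n n K) 1 (-1) 0 * fromBlocks A 0 0 D = fromBlocks 0 D (-A) 0 := by
  simp [fromBlocks_multiply]

theorem det_fromBlocks_zero_zero_sub_smul_one [Field K] (B C : Matrix n n K) {c : K}
    (hc : c ≠ 0) : (fromBlocks 0 B C 0 - c • 1).det = (c ^ 2 • 1 - C * B).det := by
  have hinv : (-c) • (1 : Matrix n n K) * (-c)⁻¹ • 1 = 1 := by simp [smul_smul, hc]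
  have := invertibleOfRightInverse _ _ hinv
  have hschur : (-c) • 1 - C * (-c)⁻¹ • 1 * B = (-c)⁻¹ • (c ^ 2 • 1 - C * B) := by
    rw [Matrix.mul_smul, mul_one, smul_mul, smul_sub, smul_smul,
      show (-c)⁻¹ * c ^ 2 = -c by field_simp]
  rw [fromBlocks_sub_smul_one, zero_sub, ← neg_smul, det_fromBlocks₁₁, invOf_eq_right_inv hinv,
    hschur, det_smul, det_smul, det_one, mul_one, ← mul_assoc, ← mul_pow,
    mul_inv_cancel₀ (neg_ne_zero.2 hc), one_pow, one_mul]

theorem det_add_smul_inv_mul_det [Field K] (A D : Matrix n n K) (hD : IsUnit D.det) (c : K) :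
    (A + c • D⁻¹).det * D.det = (c • 1 + A * D).det := by
  rw [← det_mul, add_mul, smul_mul, nonsing_inv_mul D hD, add_comm]

end

theorem canonical_form_eigenvalue_iff_pencil_general
    (n : ℕ) (Lp Lm : Matrix (Fin n) (Fin n) ℂ)
    (hLminv : IsUnit Lm.det)
    (ν : ℂ) (hν : ν ≠ 0) :
    (Matrix.fromBlocks (0 : Matrix (Fin n) (Fin n) ℂ) 1 (-1) 0 *
        Matrix.fromBlocks Lp 0 0 Lm - ν • 1).det = 0 ↔
      (Lp + ν ^ 2 • Lm⁻¹).det = 0 := by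
  rw [fromBlocks_zero_one_neg_one_zero_mul_fromBlocks_diagonal,
    det_fromBlocks_zero_zero_sub_smul_one _ _ hν, neg_mul, sub_neg_eq_add,
    ← det_add_smul_inv_mul_det _ _ hLminv, mul_eq_zero, or_iff_left hLminv.ne_zero]

/-- For `J` the standard symplectic matrix and `L = diag(L₊, L₋)` with `L₊, L₋` invertible
Hermitian, `ν ≠ 0` is an eigenvalue of `JL` iff `λ = ν²` is a characteristic value of the
linear pencil `ℒ(λ) = L₊ + λ L₋⁻¹`. -/
theorem canonical_form_eigenvalue_iff_pencil
    (n : ℕ) (Lp Lm : Matrix (Fin n) (Fin n) ℂ)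
    (hLp : Lpᴴ = Lp) (hLm : Lmᴴ = Lm)
    (hLpinv : IsUnit Lp.det) (hLminv : IsUnit Lm.det)
    (ν : ℂ) (hν : ν ≠ 0) :
    (Matrix.fromBlocks (0 : Matrix (Fin n) (Fin n) ℂ) 1 (-1) 0 *
        Matrix.fromBlocks Lp 0 0 Lm - ν • 1).det = 0 ↔
      (Lp + ν ^ 2 • Lm⁻¹).det = 0 :=
  canonical_form_eigenvalue_iff_pencil_general n Lp Lm hLminv ν hν
end
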